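/- Let η be a substitution over A with growing letter a, and let u ∈ A^{ℤ≥0} be a right-infinite periodic point of η with u_0 = a and period p ≥ 1 (so η^p(u) = u). For every integer n ≥ 1, there exist a unique integer k divisible by p and a unique a-admissible sequence (m_i, a_i)_{i=0,…,k-1} such that m_{k-1} m_{k-2} ⋯ m_{k-p} ≠ ε and u_0 u_1 ⋯ u_{n-1} = η^{k-1}(m_{k-1}) η^{k-2}(m_{k-2}) ⋯ η^0(m_0). -/

import Mathlib

open Filter List

variable {A : Type*}

/-- A substitution applied to a word: concatenation of the images of its letters. -/
def substW (η : A → List A) (w : List A) : List A := (w.map η).flatten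

/-- The `k`-th iterate of a substitution applied to a word. -/
def iterW (η : A → List A) (k : ℕ) (w : List A) : List A := (substW η)^[k] w

/-- `η` is a substitution: nonempty images and at least one growing letter. -/
def IsSubstitution (η : A → List A) : Prop :=
  (∀ c, η c ≠ []) ∧ ∃ a, Tendsto (fun k => (iterW η k [a]).length) atTop atTop

/-- `(m i, a i)` for `i = 0, …, len-1` is an `x`-admissible sequence:
`m (i) ++ [a i]` is a prefix of `η (a (i+1))` and `m (len-1) ++ [a (len-1)]`
is a prefix of `η x`. -/
def AdmSeq (η : A → List A) (len : ℕ) (m : ℕ → List A) (a : ℕ → A) (x : A) : Prop :=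
  (∀ i, i + 1 < len → (m i ++ [a i]) <+: η (a (i + 1))) ∧
  (1 ≤ len → (m (len - 1) ++ [a (len - 1)]) <+: η x)

/-- `Σ_{j<k} |η^j(m_j)|`. -/
def sumLen (η : A → List A) (k : ℕ) (m : ℕ → List A) : ℕ :=
  ∑ j ∈ Finset.range k, (iterW η j (m j)).length

/-- `η^{k-1}(m_{k-1}) η^{k-2}(m_{k-2}) ⋯ η^0(m_0)`. -/
def concatDT (η : A → List A) (k : ℕ) (m : ℕ → List A) : List A :=
  ((List.range k).reverse.map (fun j => iterW η j (m j))).flatten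

/-- The digit word `|m_{k-1}| ⊙ |m_{k-2}| ⊙ ⋯ ⊙ |m_0|`. -/
def dtDigits (k : ℕ) (m : ℕ → List A) : List ℕ :=
  (List.range k).reverse.map (fun j => (m j).length)

/-- Partial run of the automaton `A_{η,x}`: from state `x`, the digit `d`
moves to the `d`-th letter of `η x` when `d < |η x|`. -/
def run (η : A → List A) : List ℕ → A → Option A
  | [], x => some x
  | d :: w, x => if h : d < (η x).length then run η w ((η x)[d]) else none

/-- `u` restricted to nonnegative positions is a periodic point of `η` of period `p`:
every `η^p`-image of a prefix of `u` is again a prefix of `u`. -/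
def RightPer (η : A → List A) (p : ℕ) (u : ℤ → A) : Prop :=
  ∀ n : ℕ, ∀ j : ℕ, j < (iterW η p (List.ofFn (fun i : Fin (n+1) => u i))).length →
    (iterW η p (List.ofFn (fun i : Fin (n+1) => u i)))[j]? = some (u j)

/-- `u` restricted to negative positions is a periodic point of `η` of period `p`:
every `η^p`-image of a suffix `u_{-(n+1)} ⋯ u_{-1}` of the left part is again a
suffix of the left part of `u`. -/
def LeftPer (η : A → List A) (p : ℕ) (u : ℤ → A) : Prop :=
  ∀ n : ℕ, ∀ j : ℕ,
    j < (iterW η p (List.ofFn (fun i : Fin (n+1) => u ((i : ℤ) - (n+1))))).length →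
    (iterW η p (List.ofFn (fun i : Fin (n+1) => u ((i : ℤ) - (n+1)))))[j]? =
      some (u ((j : ℤ) -
        (iterW η p (List.ofFn (fun i : Fin (n+1) => u ((i : ℤ) - (n+1))))).length))

/-- `u : ℤ → A` is a two-sided periodic point of `η` of period `p ≥ 1` with
growing seed `u₋₁ | u₀`. -/
def TwoSidedPerPoint (η : A → List A) (p : ℕ) (u : ℤ → A) : Prop :=
  1 ≤ p ∧ RightPer η p u ∧ LeftPer η p u ∧
  Tendsto (fun k => (iterW η k [u 0]).length) atTop atTop ∧
  Tendsto (fun k => (iterW η k [u (-1)]).length) atTop atTop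

/-- The Dumont–Thomas decomposition data of a positive integer `n` with respect to
the letter `x` (Theorem of Dumont–Thomas for the right-infinite part):
`p ∣ k`, `p ≤ k`, the sequence is `x`-admissible, `m_{k-1} ⋯ m_{k-p} ≠ ε` and
`Σ_{j<k} |η^j(m_j)| = n`. -/
def PosSpec (η : A → List A) (p : ℕ) (x : A) (n : ℤ) (k : ℕ) (m : ℕ → List A)
    (a : ℕ → A) : Prop :=
  p ∣ k ∧ p ≤ k ∧ AdmSeq η k m a x ∧ (∃ i, i < p ∧ m (k - 1 - i) ≠ []) ∧
  (sumLen η k m : ℤ) = n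

/-- The Dumont–Thomas decomposition data of an integer `n ≤ -2` with respect to
the letter `b` (Theorem of Dumont–Thomas for the left-infinite part). -/
def NegSpec (η : A → List A) (p : ℕ) (b : A) (n : ℤ) (k : ℕ) (m : ℕ → List A)
    (a : ℕ → A) : Prop :=
  p ∣ k ∧ p ≤ k ∧ AdmSeq η k m a b ∧
  ((List.range p).map (fun i => iterW η (p - 1 - i) (m (k - 1 - i)))).flatten
      ++ [a (k - p)] ≠ iterW η p [b] ∧
  (sumLen η k m : ℤ) = n + (iterW η k [b]).length

/-- `w` is the Dumont–Thomas complement representation `rep_u(n)` of `n ∈ ℤ`. -/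
def RepSpec (η : A → List A) (p : ℕ) (u : ℤ → A) (n : ℤ) (w : List ℕ) : Prop :=
  (n = 0 ∧ w = [0]) ∨ (n = -1 ∧ w = [1]) ∨
  (1 ≤ n ∧ ∃ k m a, PosSpec η p (u 0) n k m a ∧ w = 0 :: dtDigits k m) ∨
  (n ≤ -2 ∧ ∃ k m a, NegSpec η p (u (-1)) n k m a ∧ w = 1 :: dtDigits k m)

/-- Run of the automaton `A_{η,s}` with initial state `start`: the first digit
`0` (resp. `1`) moves to `u 0` (resp. `u (-1)`). -/
def runSeed (η : A → List A) (u : ℤ → A) : List ℕ → Option A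
  | [] => none
  | d :: w => if d = 0 then run η w (u 0) else if d = 1 then run η w (u (-1)) else none

/-- `|η^{k-p-1}(m_{k-1}) ⋯ η^0(m_p)|`, the `u`-quotient of a positive integer. -/
def uQuotPos (η : A → List A) (p k : ℕ) (m : ℕ → List A) : ℤ :=
  ∑ j ∈ Finset.range (k - p), ((iterW η j (m (j + p))).length : ℤ)

/-- `w = tail_{η,p,x}(n)`: the digit word of the unique `x`-admissible sequence of
length `p` whose length-sum is `n`. -/
def TailSpec (η : A → List A) (p : ℕ) (x : A) (n : ℕ) (w : List ℕ) : Prop :=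
  ∃ m a, AdmSeq η p m a x ∧ sumLen η p m = n ∧ w = dtDigits p m

/-- Radix order: shorter words first, ties broken lexicographically. -/
def radLt (v w : List ℕ) : Prop :=
  v.length < w.length ∨ (v.length = w.length ∧ List.Lex (· < ·) v w)

/-- Reversed-radix order: longer words first, ties broken lexicographically. -/
def revLt (v w : List ℕ) : Prop :=
  w.length < v.length ∨ (v.length = w.length ∧ List.Lex (· < ·) v w)

/-- The total order `≺` on `{0,1}D*`. -/
def precLt (v w : List ℕ) : Prop :=
  (v.head? = some 1 ∧ w.head? = some 0) ∨
  (v.head? = some 0 ∧ w.head? = some 0 ∧ radLt v w) ∨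
  (v.head? = some 1 ∧ w.head? = some 1 ∧ revLt v w)

/-- The base-2 value `Σ_{i<k} w_i 2^i` of the word `w = w_{k-1} ⋯ w_0`. -/
def natVal2 (w : List ℕ) : ℕ := w.foldl (fun acc d => 2 * acc + d) 0

/-- The two's complement value `Σ_{i<k} w_i 2^i − w_{k-1} 2^k`. -/
def val2c (w : List ℕ) : ℤ := (natVal2 w : ℤ) - (w.headI : ℤ) * 2 ^ w.length

/-- Fibonacci numbers with `F 0 = 1`, `F 1 = 2`. -/
def fib2 : ℕ → ℕ
  | 0 => 1
  | 1 => 2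
  | n + 2 => fib2 (n + 1) + fib2 n

/-- The Fibonacci complement value `Σ_{i<k} w_i F_i − w_{k-1} F_k`
of the word `w = w_{k-1} ⋯ w_0`. -/
def valFc (w : List ℕ) : ℤ :=
  (∑ i ∈ Finset.range w.length, (w.reverse.getD i 0 : ℤ) * fib2 i) -
    (w.headI : ℤ) * fib2 w.length

/-!
The prefix of length `n < |η^k(x)|` of `η^k(x) = η^{k-1}(η(x))` splits uniquely as
`η^{k-1}(m_{k-1}) ⋯ η^0(m_0)` along an `x`-admissible sequence: `a_{k-1}` is the letter of `η(x)`
whose block `η^{k-1}(a_{k-1})` contains position `n`, `m_{k-1}` is what precedes it in `η(x)`, and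
one recurses into `η^{k-1}(a_{k-1})`.
Let `f` send a letter to the first letter of its image; periodicity of `u` gives `f^p(u_0) = u_0`.
An empty top block `m_{k-1} = ⋯ = m_{k-p} = ε` forces `a_{k-p} = f^p(u_0) = u_0`, so the sequence
describes a prefix of `η^{k-p}(u_0)`, and conversely a nonempty top block already covers
`η^{k-p}(u_0)`. Hence the admissible sequences allowed in the theorem are exactly those with
`|η^{k-p}(u_0)| ≤ n < |η^k(u_0)|`, which pins down `k` among the multiples of `p`.
-/

section Substitution

variable {η : A → List A}

lemma substW_append (v w : List A) : substW η (v ++ w) = substW η v ++ substW η w := by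
  simp [substW]

lemma substW_singleton (c : A) : substW η [c] = η c := by
  simp [substW]

lemma iterW_succ (k : ℕ) (w : List A) : iterW η (k + 1) w = iterW η k (substW η w) :=
  Function.iterate_succ_apply _ _ _

lemma iterW_succ' (k : ℕ) (w : List A) : iterW η (k + 1) w = substW η (iterW η k w) :=
  Function.iterate_succ_apply' _ _ _

lemma iterW_add (k l : ℕ) (w : List A) : iterW η (k + l) w = iterW η k (iterW η l w) :=
  Function.iterate_add_apply _ _ _ _

lemma iterW_singleton_succ (k : ℕ) (c : A) : iterW η (k + 1) [c] = iterW η k (η c) := by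
  rw [iterW_succ, substW_singleton]

@[simp]
lemma iterW_nil (k : ℕ) : iterW η k [] = [] := by
  induction k with
  | zero => rfl
  | succ k ih => rw [iterW_succ', ih]; rfl

lemma iterW_append (k : ℕ) (v w : List A) :
    iterW η k (v ++ w) = iterW η k v ++ iterW η k w := by
  induction k with
  | zero => rfl
  | succ k ih => rw [iterW_succ', iterW_succ', iterW_succ', ih, substW_append]

lemma List.IsPrefix.iterW {v w : List A} (h : v <+: w) (η : A → List A) (k : ℕ) :
    _root_.iterW η k v <+: _root_.iterW η k w := by
  obtain ⟨t, rfl⟩ := h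
  exact ⟨_root_.iterW η k t, (iterW_append k v t).symm⟩

lemma length_le_length_substW (hne : ∀ c, η c ≠ []) (w : List A) :
    w.length ≤ (substW η w).length := by
  induction w with
  | nil => simp [substW]
  | cons c t ih =>
    rw [← singleton_append, substW_append, substW_singleton, length_append, length_append]
    have := length_pos_iff.2 (hne c)
    simp only [length_singleton]
    omega

lemma monotone_length_iterW (hne : ∀ c, η c ≠ []) (w : List A) :
    Monotone fun k => (iterW η k w).length :=
  monotone_nat_of_le_succ fun k => by
    simp only [iterW_succ']
    exact length_le_length_substW hne _

lemma exists_prefix_length_iterW_le_lt {k n : ℕ} {w : List A}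
    (hn : n < (iterW η k w).length) :
    ∃ v c, v ++ [c] <+: w ∧ (iterW η k v).length ≤ n ∧
      n < (iterW η k v).length + (iterW η k [c]).length := by
  induction w generalizing n with
  | nil => simp at hn
  | cons c t ih =>
    by_cases hc : n < (iterW η k [c]).length
    · exact ⟨[], c, by simp, by simp, by simpa using hc⟩
    · rw [← singleton_append, iterW_append, length_append] at hn
      obtain ⟨v, d, hpre, hle, hlt⟩ := ih (n := n - (iterW η k [c]).length) (by omega)
      refine ⟨c :: v, d, by simpa using hpre, ?_, ?_⟩ <;>
        rw [← singleton_append, iterW_append, length_append] <;> omega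

variable {f : A → A}

lemma singleton_iterate_prefix_iterW (hf : ∀ y, [f y] <+: η y) (i : ℕ) (y : A) :
    [f^[i] y] <+: iterW η i [y] := by
  induction i generalizing y with
  | zero => exact prefix_rfl
  | succ i ih =>
    rw [Function.iterate_succ_apply, iterW_singleton_succ]
    exact (ih (f y)).trans ((hf y).iterW η i)

lemma length_iterW_iterate_le (hf : ∀ y, [f y] <+: η y) {i k : ℕ} (hik : i ≤ k) (y : A) :
    (iterW η (k - i) [f^[i] y]).length ≤ (iterW η k [y]).length := by
  have h := (singleton_iterate_prefix_iterW hf i y).iterW η (k - i)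
  rw [← iterW_add, Nat.sub_add_cancel hik] at h
  exact h.length_le

end Substitution

section Admissible

variable {η : A → List A} {k : ℕ} {m m' : ℕ → List A} {a a' : ℕ → A} {x : A}

lemma sumLen_succ : sumLen η (k + 1) m = sumLen η k m + (iterW η k (m k)).length :=
  Finset.sum_range_succ _ _

lemma concatDT_succ : concatDT η (k + 1) m = iterW η k (m k) ++ concatDT η k m := by
  simp [concatDT, range_succ]

lemma length_concatDT : (concatDT η k m).length = sumLen η k m := by
  induction k with
  | zero => rfl
  | succ k ih => rw [concatDT_succ, sumLen_succ, length_append, ih, Nat.add_comm]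

lemma sumLen_congr (h : ∀ i < k, m i = m' i) : sumLen η k m = sumLen η k m' :=
  Finset.sum_congr rfl fun i hi => by rw [h i (Finset.mem_range.1 hi)]

lemma AdmSeq.congr (h : ∀ i < k, m i = m' i ∧ a i = a' i) :
    AdmSeq η k m a x ↔ AdmSeq η k m' a' x := by
  unfold AdmSeq
  refine and_congr (forall_congr' fun i => imp_congr_right fun hi => ?_)
    (imp_congr_right fun hk => ?_)
  · rw [(h i (by omega)).1, (h i (by omega)).2, (h (i + 1) hi).2]
  · rw [(h (k - 1) (by omega)).1, (h (k - 1) (by omega)).2]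

lemma AdmSeq.succ_iff :
    AdmSeq η (k + 1) m a x ↔ AdmSeq η k m a (a k) ∧ m k ++ [a k] <+: η x := by
  constructor
  · rintro ⟨hlow, htop⟩
    refine ⟨⟨fun i hi => hlow i (by omega), fun hk => ?_⟩, by simpa using htop (by omega)⟩
    simpa [Nat.sub_add_cancel hk] using hlow (k - 1) (by omega)
  · rintro ⟨⟨hlow, htop⟩, hk⟩
    refine ⟨fun i hi => ?_, fun _ => by simpa using hk⟩
    rcases Nat.lt_or_ge (i + 1) k with hik | hik
    · exact hlow i hik
    · obtain rfl : k = i + 1 := by omega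
      simpa using htop (by omega)

lemma AdmSeq.concatDT_append_singleton_prefix (h : AdmSeq η k m a x) :
    ∃ c, concatDT η k m ++ [c] <+: iterW η k [x] := by
  induction k generalizing x with
  | zero => exact ⟨x, prefix_rfl⟩
  | succ k ih =>
    obtain ⟨hlow, htop⟩ := AdmSeq.succ_iff.1 h
    obtain ⟨c, hc⟩ := ih hlow
    refine ⟨c, ?_⟩
    rw [concatDT_succ, iterW_singleton_succ, append_assoc]
    have htop := htop.iterW η k
    rw [iterW_append] at htop
    exact ((prefix_append_right_inj _).2 hc).trans htop

lemma AdmSeq.concatDT_prefix (h : AdmSeq η k m a x) : concatDT η k m <+: iterW η k [x] :=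
  have ⟨_, hc⟩ := h.concatDT_append_singleton_prefix
  (prefix_append _ _).trans hc

lemma AdmSeq.sumLen_lt (h : AdmSeq η k m a x) : sumLen η k m < (iterW η k [x]).length := by
  obtain ⟨c, hc⟩ := h.concatDT_append_singleton_prefix
  have := hc.length_le
  rw [length_append, length_concatDT, length_singleton] at this
  omega

lemma AdmSeq.sumLen_lt_sumLen_of_length_lt (h : AdmSeq η (k + 1) m a x)
    (h' : AdmSeq η (k + 1) m' a' x) (hlt : (m k).length < (m' k).length) :
    sumLen η (k + 1) m < sumLen η (k + 1) m' := by
  obtain ⟨hlow, htop⟩ := AdmSeq.succ_iff.1 h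
  have hpre : m k ++ [a k] <+: m' k :=
    prefix_of_prefix_length_le htop ((prefix_append _ _).trans (AdmSeq.succ_iff.1 h').2)
      (by simpa using hlt)
  have hle := (hpre.iterW η k).length_le
  rw [iterW_append, length_append] at hle
  have := hlow.sumLen_lt
  rw [sumLen_succ, sumLen_succ]
  omega

lemma AdmSeq.unique (h : AdmSeq η k m a x) (h' : AdmSeq η k m' a' x)
    (hs : sumLen η k m = sumLen η k m') : ∀ i < k, m i = m' i ∧ a i = a' i := by
  induction k generalizing x with
  | zero => intro i hi; omega
  | succ k ih =>
    have hlen : (m k).length = (m' k).length := by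
      by_contra hne
      rcases Nat.lt_or_gt_of_ne hne with hlt | hlt
      · exact (h.sumLen_lt_sumLen_of_length_lt h' hlt).ne hs
      · exact (h'.sumLen_lt_sumLen_of_length_lt h hlt).ne hs.symm
    obtain ⟨hlow, htop⟩ := AdmSeq.succ_iff.1 h
    obtain ⟨hlow', htop'⟩ := AdmSeq.succ_iff.1 h'
    obtain ⟨hm, ha⟩ := append_inj
      ((prefix_of_prefix_length_le htop htop' (by simp [hlen])).eq_of_length (by simp [hlen]))
      hlen
    rw [singleton_inj] at ha
    rw [sumLen_succ, sumLen_succ, hm, Nat.add_right_cancel_iff] at hs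
    rw [← ha] at hlow'
    intro i hi
    rcases Nat.lt_succ_iff_lt_or_eq.1 hi with hik | rfl
    · exact ih hlow hlow' hs i hik
    · exact ⟨hm, ha⟩

lemma exists_admSeq_sumLen_eq {n : ℕ} (hn : n < (iterW η k [x]).length) :
    ∃ m a, AdmSeq η k m a x ∧ sumLen η k m = n := by
  induction k generalizing x n with
  | zero =>
    obtain rfl : n = 0 := Nat.lt_one_iff.1 hn
    exact ⟨fun _ => [], fun _ => x, ⟨fun _ _ => by omega, fun _ => by omega⟩, rfl⟩
  | succ k ih =>
    rw [iterW_singleton_succ] at hn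
    obtain ⟨v, c, hpre, hle, hlt⟩ := exists_prefix_length_iterW_le_lt hn
    obtain ⟨m, a, hA, hs⟩ := ih (x := c) (n := n - (iterW η k v).length) (by omega)
    have hbelow : ∀ i < k, Function.update m k v i = m i ∧ Function.update a k c i = a i :=
      fun i hi => ⟨Function.update_of_ne hi.ne _ _, Function.update_of_ne hi.ne _ _⟩
    refine ⟨Function.update m k v, Function.update a k c, AdmSeq.succ_iff.2 ⟨?_, ?_⟩, ?_⟩
    · rw [Function.update_self, AdmSeq.congr hbelow]
      exact hA
    · simpa using hpre
    · rw [sumLen_succ, sumLen_congr fun i hi => (hbelow i hi).1, hs, Function.update_self]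
      omega

variable {f : A → A}

lemma AdmSeq.exists_ne_nil_iff (hf : ∀ y, [f y] <+: η y) (h : AdmSeq η k m a x) {i : ℕ}
    (hik : i ≤ k) :
    (∃ j < i, m (k - 1 - j) ≠ []) ↔ (iterW η (k - i) [f^[i] x]).length ≤ sumLen η k m := by
  induction i generalizing k x with
  | zero => simpa using h.sumLen_lt
  | succ i ih =>
    obtain ⟨k, rfl⟩ : ∃ k', k = k' + 1 := ⟨k - 1, by omega⟩
    obtain ⟨hlow, htop⟩ := AdmSeq.succ_iff.1 h
    by_cases hmk : m k = []
    · rw [hmk, nil_append] at htop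
      have hak : a k = f x := by
        have := singleton_prefix_iff_head?_eq_some.1 htop
        rw [singleton_prefix_iff_head?_eq_some.1 (hf x)] at this
        exact (Option.some.inj this).symm
      rw [hak] at hlow
      rw [sumLen_succ, hmk, iterW_nil, length_nil, add_zero, Function.iterate_succ_apply,
        show k + 1 - (i + 1) = k - i by omega, ← ih hlow (by omega)]
      constructor
      · rintro ⟨j, hj, hmj⟩
        obtain _ | j := j
        · exact absurd hmk (by simpa using hmj)
        · exact ⟨j, by omega, by simpa [show k - (j + 1) = k - 1 - j by omega] using hmj⟩
      · rintro ⟨j, hj, hmj⟩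
        exact ⟨j + 1, by omega, by simpa [show k - (j + 1) = k - 1 - j by omega] using hmj⟩
    · refine iff_of_true ⟨0, by omega, by simpa using hmk⟩ ?_
      have hfirst : [f x] <+: m k :=
        prefix_of_prefix_length_le (hf x) ((prefix_append _ _).trans htop)
          (length_pos_iff.2 hmk)
      calc (iterW η (k + 1 - (i + 1)) [f^[i + 1] x]).length
          = (iterW η (k - i) [f^[i] (f x)]).length := by
            rw [Function.iterate_succ_apply, show k + 1 - (i + 1) = k - i by omega]
        _ ≤ (iterW η k [f x]).length := length_iterW_iterate_le hf (by omega) _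
        _ ≤ (iterW η k (m k)).length := (hfirst.iterW η k).length_le
        _ ≤ sumLen η (k + 1) m := by rw [sumLen_succ]; omega

end Admissible

section PeriodicPoint

def IsPrefixOfSeq (w : List A) (u : ℕ → A) : Prop :=
  ∀ j < w.length, w[j]? = some (u j)

variable {η : A → List A} {v w : List A} {u : ℕ → A}

lemma IsPrefixOfSeq.of_prefix (hw : IsPrefixOfSeq w u) (hv : v <+: w) : IsPrefixOfSeq v u :=
  fun j hj => by
    rw [getElem?_eq_getElem hj, ← prefix_iff_getElem?.1 hv j hj]
    exact hw j (hj.trans_le hv.length_le)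

lemma IsPrefixOfSeq.eq_ofFn (hw : IsPrefixOfSeq w u) {L : ℕ} (hL : w.length = L) :
    w = ofFn fun i : Fin L => u i := by
  subst hL
  refine ext_getElem (by simp) fun j h _ => ?_
  simpa [getElem?_eq_getElem h] using hw j h

lemma isPrefixOfSeq_iterW_mul (hne : ∀ c, η c ≠ []) {p : ℕ}
    (hper : ∀ n, IsPrefixOfSeq (iterW η p (ofFn fun i : Fin (n + 1) => u i)) u) (q : ℕ) :
    IsPrefixOfSeq (iterW η (p * q) [u 0]) u := by
  induction q with
  | zero =>
    intro j hj
    obtain rfl : j = 0 := Nat.lt_one_iff.1 hj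
    rfl
  | succ q ih =>
    obtain ⟨L, hL⟩ : ∃ L, (iterW η (p * q) [u 0]).length = L + 1 :=
      Nat.exists_eq_add_one.2 (monotone_length_iterW hne [u 0] (Nat.zero_le _))
    rw [Nat.mul_succ, Nat.add_comm, iterW_add, ih.eq_ofFn hL]
    exact hper L

lemma iterate_eq_of_isPrefixOfSeq {f : A → A} (hf : ∀ y, [f y] <+: η y) {p : ℕ}
    (h : IsPrefixOfSeq (iterW η p [u 0]) u) : f^[p] (u 0) = u 0 := by
  have hhead := singleton_prefix_iff_head?_eq_some.1 (singleton_iterate_prefix_iterW hf p (u 0))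
  have hlen := (singleton_iterate_prefix_iterW hf p (u 0)).length_le
  rw [head?_eq_getElem?, h 0 hlen] at hhead
  exact (Option.some.inj hhead).symm

end PeriodicPoint

lemma Nat.exists_map_le_lt_map_succ {g : ℕ → ℕ} {n : ℕ} (h0 : g 0 ≤ n) (hn : ∃ q, n < g q) :
    ∃ q, g q ≤ n ∧ n < g (q + 1) := by
  classical
  have hpos : Nat.find hn ≠ 0 := fun h => by
    have := Nat.find_spec hn
    rw [h] at this
    omega
  refine ⟨Nat.find hn - 1, not_lt.1 (Nat.find_min hn (by omega)), ?_⟩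
  rw [Nat.sub_add_cancel (Nat.one_le_iff_ne_zero.2 hpos)]
  exact Nat.find_spec hn

lemma Monotone.eq_of_map_le_lt_map_succ {g : ℕ → ℕ} (hg : Monotone g) {n q q' : ℕ}
    (h : g q ≤ n ∧ n < g (q + 1)) (h' : g q' ≤ n ∧ n < g (q' + 1)) : q = q' := by
  by_contra hne
  rcases Nat.lt_or_gt_of_ne hne with hlt | hlt
  · exact absurd (hg (show q + 1 ≤ q' by omega)) (by omega)
  · exact absurd (hg (show q' + 1 ≤ q by omega)) (by omega)

theorem dumont_thomas_right_general (η : A → List A) (hη : IsSubstitution η)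
    (p : ℕ) (hp : 1 ≤ p) (u : ℕ → A)
    (hgrow : Tendsto (fun k => (iterW η k [u 0]).length) atTop atTop)
    (hper : ∀ n : ℕ, ∀ j : ℕ,
      j < (iterW η p (List.ofFn (fun i : Fin (n+1) => u i))).length →
      (iterW η p (List.ofFn (fun i : Fin (n+1) => u i)))[j]? = some (u j))
    (n : ℕ) (hn : 1 ≤ n) :
    ∃ (k : ℕ) (m : ℕ → List A) (a : ℕ → A),
      (p ∣ k ∧ p ≤ k ∧ AdmSeq η k m a (u 0) ∧
        (∃ i, i < p ∧ m (k - 1 - i) ≠ []) ∧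
        (concatDT η k m).length = n ∧
        ∀ j < n, (concatDT η k m)[j]? = some (u j)) ∧
      ∀ (k' : ℕ) (m' : ℕ → List A) (a' : ℕ → A),
        (p ∣ k' ∧ p ≤ k' ∧ AdmSeq η k' m' a' (u 0) ∧
          (∃ i, i < p ∧ m' (k' - 1 - i) ≠ []) ∧
          (concatDT η k' m').length = n ∧
          ∀ j < n, (concatDT η k' m')[j]? = some (u j)) →
        k = k' ∧ ∀ i < k, m i = m' i ∧ a i = a' i := by
  have hne := hη.1
  let f : A → A := fun y => (η y).head (hne y)
  have hf : ∀ y, [f y] <+: η y := fun y => ⟨(η y).tail, cons_head_tail (hne y)⟩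
  have hpre := isPrefixOfSeq_iterW_mul hne hper
  have hfix : f^[p] (u 0) = u 0 := iterate_eq_of_isPrefixOfSeq hf (by simpa using hpre 1)
  set g : ℕ → ℕ := fun q => (iterW η (p * q) [u 0]).length
  have hg : Monotone g := (monotone_length_iterW hne _).comp fun _ _ => Nat.mul_le_mul_left p
  obtain ⟨q, hq⟩ : ∃ q, g q ≤ n ∧ n < g (q + 1) := by
    refine Nat.exists_map_le_lt_map_succ (by simpa [g, iterW] using hn) ?_
    obtain ⟨K, hK⟩ := eventually_atTop.1 (hgrow.eventually_gt_atTop n)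
    exact ⟨K, hK _ (Nat.le_mul_of_pos_left K hp)⟩
  have hvalid : ∀ {k m a}, p ∣ k → p ≤ k → AdmSeq η k m a (u 0) → sumLen η k m = n →
      ((∃ i < p, m (k - 1 - i) ≠ []) ↔ k = p * (q + 1)) := by
    rintro k m a ⟨c, rfl⟩ hpk hA hs
    obtain ⟨c, rfl⟩ := Nat.exists_eq_add_one_of_ne_zero (show c ≠ 0 by rintro rfl; omega)
    have hlt : n < g (c + 1) := hs ▸ hA.sumLen_lt
    rw [hA.exists_ne_nil_iff hf hpk, hfix, hs, Nat.mul_succ, Nat.add_sub_cancel,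
      ← Nat.mul_succ, Nat.mul_left_cancel_iff hp, Nat.succ_inj]
    exact ⟨fun hc => hg.eq_of_map_le_lt_map_succ ⟨hc, hlt⟩ hq, by rintro rfl; exact hq.1⟩
  obtain ⟨m, a, hA, hs⟩ := exists_admSeq_sumLen_eq hq.2
  refine ⟨p * (q + 1), m, a, ⟨dvd_mul_right _ _, Nat.le_mul_of_pos_right _ q.succ_pos, hA,
    (hvalid (dvd_mul_right _ _) (Nat.le_mul_of_pos_right _ q.succ_pos) hA hs).2 rfl,
    length_concatDT.trans hs, fun j hj => (hpre (q + 1)).of_prefix hA.concatDT_prefix j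
      (by rwa [length_concatDT, hs])⟩, ?_⟩
  rintro k' m' a' ⟨hdvd, hpk, hA', htop, hlen, -⟩
  rw [length_concatDT] at hlen
  obtain rfl := ((hvalid hdvd hpk hA' hlen).1 htop).symm
  exact ⟨rfl, hA.unique hA' (hs.trans hlen.symm)⟩

/-- Dumont–Thomas theorem for right-infinite periodic points.
If `u` is a right-infinite periodic point of `η` of period `p` with growing seed
`u 0`, then every `n ≥ 1` admits a unique `k` divisible by `p` and a unique
`u 0`-admissible sequence `(m_i,a_i)_{i=0,…,k-1}` with `m_{k-1} ⋯ m_{k-p} ≠ ε`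
and `u_0 ⋯ u_{n-1} = η^{k-1}(m_{k-1}) ⋯ η^0(m_0)`. -/
theorem dumont_thomas_right [Finite A] (η : A → List A) (hη : IsSubstitution η)
    (p : ℕ) (hp : 1 ≤ p) (u : ℕ → A)
    (hgrow : Tendsto (fun k => (iterW η k [u 0]).length) atTop atTop)
    (hper : ∀ n : ℕ, ∀ j : ℕ,
      j < (iterW η p (List.ofFn (fun i : Fin (n+1) => u i))).length →
      (iterW η p (List.ofFn (fun i : Fin (n+1) => u i)))[j]? = some (u j))
    (n : ℕ) (hn : 1 ≤ n) :
    ∃ (k : ℕ) (m : ℕ → List A) (a : ℕ → A),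
      (p ∣ k ∧ p ≤ k ∧ AdmSeq η k m a (u 0) ∧
        (∃ i, i < p ∧ m (k - 1 - i) ≠ []) ∧
        (concatDT η k m).length = n ∧
        ∀ j < n, (concatDT η k m)[j]? = some (u j)) ∧
      ∀ (k' : ℕ) (m' : ℕ → List A) (a' : ℕ → A),
        (p ∣ k' ∧ p ≤ k' ∧ AdmSeq η k' m' a' (u 0) ∧
          (∃ i, i < p ∧ m' (k' - 1 - i) ≠ []) ∧
          (concatDT η k' m').length = n ∧
          ∀ j < n, (concatDT η k' m')[j]? = some (u j)) →
        k = k' ∧ ∀ i < k, m i = m' i ∧ a i = a' i :=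
  dumont_thomas_right_general η hη p hp u hgrow hper n hn
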